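/- The bicharacter r satisfies r(g y₁, g⁻¹y₁) = N·t⁻². (In the paper's notation: r(e^{λ₀}λ₀(1) ⊗ e^{−λ₀}λ₀(1)) = N(x−y)⁻².) -/

import Mathlib

open TensorProduct

noncomputable section

/-- `Rb` is the commutative `ℂ`-algebra `ℂ[g,g⁻¹] ⊗ ℂ[y₁,y₂,…]`, realized as Laurent
polynomials in one variable with coefficients in a polynomial ring in countably many
variables.  It is the underlying algebra of Borcherds's rank-one lattice bialgebra `V^L`. -/
abbrev Rb : Type := LaurentPolynomial (MvPolynomial ℕ ℂ)

/-- `Lt` is the Laurent polynomial ring `ℂ[t,t⁻¹]`. -/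
abbrev Lt : Type := LaurentPolynomial ℂ

/-- `gp n` is the element `gⁿ` of `Rb`. -/
def gp (n : ℤ) : Rb := LaurentPolynomial.T n

/-- `yv k` is the variable `y_k` of `Rb` (only `k ≥ 1` is used). -/
def yv (k : ℕ) : Rb := LaurentPolynomial.C (MvPolynomial.X k)

/-- `tp n` is the element `tⁿ` of `ℂ[t,t⁻¹]`. -/
def tp (n : ℤ) : Lt := LaurentPolynomial.T n

/-!
Since `y₁ = D g` and `g` is grouplike, the compatibility of `Δ` with `D` makes `g⁻¹ y₁`
primitive. Splitting the first argument `g · y₁` by (B4) therefore leaves only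
`r(y₁, g⁻¹ y₁) = d r(g, g⁻¹ y₁) = d ι r(g⁻¹ y₁, g)`, and a second application of (B4), now
against the grouplike `g`, gives `r(g⁻¹ y₁, g) = t^{-N} · d(t^N) = N t⁻¹`.
Hence the value is `d ι (N t⁻¹) = d (-N t⁻¹) = N t⁻²`.
-/

section Coproduct

variable {R A : Type*} [CommSemiring R] [CommSemiring A] [Algebra R A]
  (Δ : A →ₐ[R] A ⊗[R] A) (D : Derivation R A A)
  (hΔD : ∀ v : A, Δ (D v) =
    (TensorProduct.map D.toLinearMap LinearMap.id
      + TensorProduct.map LinearMap.id D.toLinearMap : A ⊗[R] A →ₗ[R] A ⊗[R] A) (Δ v))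
include hΔD

theorem coproduct_derivation_of_grouplike {a : A} (ha : Δ a = a ⊗ₜ a) :
    Δ (D a) = D a ⊗ₜ a + a ⊗ₜ D a := by
  simp [hΔD, ha]

theorem coproduct_mul_derivation_of_grouplike {a b : A} (ha : Δ a = a ⊗ₜ a)
    (hb : Δ b = b ⊗ₜ b) (hba : b * a = 1) :
    Δ (b * D a) = (b * D a) ⊗ₜ 1 + 1 ⊗ₜ (b * D a) := by
  rw [map_mul, hb, coproduct_derivation_of_grouplike Δ D hΔD ha, mul_add,
    Algebra.TensorProduct.tmul_mul_tmul, Algebra.TensorProduct.tmul_mul_tmul, hba]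

end Coproduct

section Bicharacter

variable {R A B : Type*} [CommSemiring R] [Semiring A] [Algebra R A] [CommSemiring B]
  [Algebra R B] (Δ : A →ₐ[R] A ⊗[R] A) (r : A →ₗ[R] A →ₗ[R] B)
  (hB4 : ∀ v₁ v₂ w : A, r (v₁ * v₂) w =
    TensorProduct.lift ((LinearMap.mul R B).compl₁₂ (r v₁) (r v₂)) (Δ w))
include hB4

theorem bicharacter_mul_of_grouplike {w : A} (hw : Δ w = w ⊗ₜ w) (v₁ v₂ : A) :
    r (v₁ * v₂) w = r v₁ w * r v₂ w := by
  simp [hB4, hw]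

theorem bicharacter_mul_of_primitive {w : A} (hw : Δ w = w ⊗ₜ 1 + 1 ⊗ₜ w) (v₁ v₂ : A) :
    r (v₁ * v₂) w = r v₁ w * r v₂ 1 + r v₁ 1 * r v₂ w := by
  simp [hB4, hw]

end Bicharacter

theorem map_eq_neg_of_mul_eq_one {M F : Type*} [Ring M] [FunLike F M M] [MonoidHomClass F M M]
    (f : F) {x y : M} (hx : f x = -x) (hyx : y * x = 1) (hxy : x * y = 1) : f y = -y :=
  left_inv_eq_right_inv (by rw [← hx, ← map_mul, hyx, map_one] : f y * -x = 1)
    (by rw [neg_mul_neg, hxy])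

theorem tp_mul_tp (a b : ℤ) : tp a * tp b = tp (a + b) :=
  (LaurentPolynomial.T_add a b).symm

theorem gp_neg_one_mul_gp_one : gp (-1) * gp 1 = 1 := by
  rw [gp, gp, ← LaurentPolynomial.T_add]
  exact LaurentPolynomial.T_zero

theorem gp_zero : gp 0 = 1 := LaurentPolynomial.T_zero

theorem tp_zero : tp 0 = 1 := LaurentPolynomial.T_zero

theorem bicharacter_g_y1_ginv_y1_general
    (N : ℕ)
    (D : Derivation ℂ Rb Rb) (hDg : D (gp 1) = yv 1)
    (Δ : Rb →ₐ[ℂ] Rb ⊗[ℂ] Rb)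
    (hΔg : ∀ n : ℤ, Δ (gp n) = gp n ⊗ₜ[ℂ] gp n)
    (hΔD : ∀ v : Rb, Δ (D v) =
      (TensorProduct.map D.toLinearMap LinearMap.id
        + TensorProduct.map LinearMap.id D.toLinearMap
        : Rb ⊗[ℂ] Rb →ₗ[ℂ] Rb ⊗[ℂ] Rb) (Δ v))
    (d : Derivation ℂ Lt Lt) (hd : ∀ n : ℤ, d (tp n) = (n : ℂ) • tp (n - 1))
    (ι : Lt ≃ₐ[ℂ] Lt) (hι : ι (tp 1) = - tp 1)
    (r : Rb →ₗ[ℂ] Rb →ₗ[ℂ] Lt)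
    (hB1 : ∀ n m : ℤ, r (gp n) (gp m) = tp (n * m * (N : ℤ)))
    (hB2 : ∀ v w : Rb, r w v = ι (r v w))
    (hB3 : ∀ v w : Rb, r (D v) w = d (r v w))
    (hB4 : ∀ v₁ v₂ w : Rb, r (v₁ * v₂) w =
      TensorProduct.lift ((LinearMap.mul ℂ Lt).compl₁₂ (r v₁) (r v₂)) (Δ w)) :
    r (gp 1 * yv 1) (gp (-1) * yv 1) = (N : ℂ) • tp (-2) := by
  have hprim : Δ (gp (-1) * yv 1) = (gp (-1) * yv 1) ⊗ₜ 1 + 1 ⊗ₜ (gp (-1) * yv 1) :=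
    hDg ▸ coproduct_mul_derivation_of_grouplike Δ D hΔD (hΔg 1) (hΔg (-1)) gp_neg_one_mul_gp_one
  have hι_inv : ι (tp (-1)) = -tp (-1) :=
    map_eq_neg_of_mul_eq_one ι hι (by simp [tp_mul_tp, tp_zero]) (by simp [tp_mul_tp, tp_zero])
  have hr : r (gp (-1) * yv 1) (gp 1) = (N : ℂ) • tp (-1) := by
    rw [bicharacter_mul_of_grouplike Δ r hB4 (hΔg 1), ← hDg, hB3, hB1, hB1, hd, mul_smul_comm,
      tp_mul_tp]
    congr 2 <;> push_cast <;> ring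
  have hg1 : r (gp 1) 1 = 1 := by rw [← gp_zero, hB1]; simp [tp_zero]
  have hy1 : r (yv 1) 1 = 0 := by rw [← hDg, hB3, hg1, d.map_one_eq_zero]
  calc r (gp 1 * yv 1) (gp (-1) * yv 1) = r (yv 1) (gp (-1) * yv 1) := by
        rw [bicharacter_mul_of_primitive Δ r hB4 hprim, hg1, hy1, mul_zero, zero_add, one_mul]
    _ = d (ι (r (gp (-1) * yv 1) (gp 1))) := by rw [← hDg, hB3, hB2]
    _ = (N : ℂ) • tp (-2) := by
        rw [hr, map_smul, hι_inv, smul_neg, map_neg, d.map_smul, hd, smul_smul]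
        norm_num

/-- `r(g y₁, g⁻¹y₁) = N·t⁻²`. -/
theorem bicharacter_g_y1_ginv_y1
    (N : ℕ) (hNpos : 0 < N) (hNeven : Even N)
    (D : Derivation ℂ Rb Rb) (hDg : D (gp 1) = yv 1)
    (hDy : ∀ k : ℕ, 1 ≤ k → D (yv k) = ((k : ℂ) + 1) • yv (k + 1))
    (Δ : Rb →ₐ[ℂ] Rb ⊗[ℂ] Rb)
    (hΔg : ∀ n : ℤ, Δ (gp n) = gp n ⊗ₜ[ℂ] gp n)
    (hΔD : ∀ v : Rb, Δ (D v) =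
      (TensorProduct.map D.toLinearMap LinearMap.id
        + TensorProduct.map LinearMap.id D.toLinearMap
        : Rb ⊗[ℂ] Rb →ₗ[ℂ] Rb ⊗[ℂ] Rb) (Δ v))
    (d : Derivation ℂ Lt Lt) (hd : ∀ n : ℤ, d (tp n) = (n : ℂ) • tp (n - 1))
    (ι : Lt ≃ₐ[ℂ] Lt) (hι : ι (tp 1) = - tp 1)
    (r : Rb →ₗ[ℂ] Rb →ₗ[ℂ] Lt)
    (hB1 : ∀ n m : ℤ, r (gp n) (gp m) = tp (n * m * (N : ℤ)))
    (hB2 : ∀ v w : Rb, r w v = ι (r v w))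
    (hB3 : ∀ v w : Rb, r (D v) w = d (r v w))
    (hB4 : ∀ v₁ v₂ w : Rb, r (v₁ * v₂) w =
      TensorProduct.lift ((LinearMap.mul ℂ Lt).compl₁₂ (r v₁) (r v₂)) (Δ w)) :
    r (gp 1 * yv 1) (gp (-1) * yv 1) = (N : ℂ) • tp (-2) :=
  bicharacter_g_y1_ginv_y1_general N D hDg Δ hΔg hΔD d hd ι hι r hB1 hB2 hB3 hB4
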